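/- arXiv:2604.02192 — 3 statements merged into one kernel-verified Lean document; each statement's English description precedes it below -/
import Mathlib

section
/- If α is a covering map from a graph F onto a graph G, then for every vertex x of F and every round r ≥ 0, the color refinement colors satisfy C_r(x) (computed in F) equals C_r(α(x)) (computed in G). -/
/-- Codomain of the round-`r` color refinement coloring. -/
def ColorType : ℕ → Type
  | 0 => ℕ
  | r + 1 => Multiset (ColorType r)

/-- The color refinement colorings of a finite simple graph:
`C 0 x = deg x` and `C (r+1) x` is the multiset of the round-`r` colors of the
neighbors of `x`. -/
def CR {V : Type*} [Fintype V] (G : SimpleGraph V) [DecidableRel G.Adj] :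
    (r : ℕ) → V → ColorType r
  | 0, x => G.degree x
  | r + 1, x => (G.neighborFinset x).val.map (CR G r)

/-- If `α` is a covering map from `F` onto `G` (a graph homomorphism bijective
on each vertex neighborhood), then color refinement colors are preserved:
`C_r(x)` computed in `F` equals `C_r(α x)` computed in `G`, for all `x` and `r`. -/
theorem covering_map_preserves_CR {U V : Type*} [Fintype U] [Fintype V]
    (F : SimpleGraph U) (G : SimpleGraph V)
    [DecidableRel F.Adj] [DecidableRel G.Adj]
    (α : U → V)
    (hhom : ∀ a b : U, F.Adj a b → G.Adj (α a) (α b))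
    (hcov : ∀ x : U, Set.BijOn α (F.neighborSet x) (G.neighborSet (α x)))
    (x : U) (r : ℕ) : CR F r x = CR G r (α x) := by
  induction r generalizing x with
  | zero =>
      simp only [CR]
      rw [← SimpleGraph.card_neighborSet_eq_degree, ← SimpleGraph.card_neighborSet_eq_degree]
      exact Fintype.card_congr ((hcov x).equiv α)
  | succ r ih =>
      haveI : DecidableEq V := Classical.decEq V
      simp only [CR]
      have himg : Finset.image α (F.neighborFinset x) = G.neighborFinset (α x) := by
        ext v
        simp only [Finset.mem_image, SimpleGraph.mem_neighborFinset]
        constructor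
        · rintro ⟨a, ha, rfl⟩; exact hhom x a ha
        · intro hv
          obtain ⟨a, ha, rfl⟩ := (hcov x).surjOn hv
          exact ⟨a, ha, rfl⟩
      have hval : (F.neighborFinset x).val.map α = (G.neighborFinset (α x)).val := by
        rw [← himg, Finset.image_val_of_injOn]
        intro a ha b hb
        exact (hcov x).injOn (by simpa using ha) (by simpa using hb)
      calc (F.neighborFinset x).val.map (CR F r)
          = (F.neighborFinset x).val.map (CR G r ∘ α) := by
            apply Multiset.map_congr rfl
            intro y _; exact ih y
        _ = ((F.neighborFinset x).val.map α).map (CR G r) := by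
            rw [Multiset.map_map]
        _ = (G.neighborFinset (α x)).val.map (CR G r) := by rw [hval]
end

section
/- Suppose a graph G contains a triangle {a,b,c} and at least one additional vertex, and every vertex of G has degree at least 1. Construct the lift F on vertex set V(G) × {0,1,2,3} where for each edge e of G other than the triangle edges e_1={b,c}, e_2={a,c}, e_3={a,b}, the copies {x_i, y_i} are edges of F for all i; and for each triangle edge e_i = {x,y} (i = 1,2,3), the edges {x_0,y_0} and {x_i,y_i} are replaced by {x_0,y_i} and {x_i,y_0}. Then F contains no Hamiltonian cycle. -/
/-- The lift `F` of `G` over four copies, obtained by twisting the three edges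
of the triangle `{a,b,c}` (`e₁ = {b,c}`, `e₂ = {a,c}`, `e₃ = {a,b}`): copies of
every non-triangle edge connect equal indices; for the triangle edge `eₜ = {x,y}`
(`t = 1,2,3`) the edges `{x₀,y₀}` and `{xₜ,yₜ}` are replaced by the twisted
edges `{x₀,yₜ}` and `{xₜ,y₀}`. -/
def liftF {V : Type*} (G : SimpleGraph V) (a b c : V) : SimpleGraph (V × Fin 4) where
  Adj p q := G.Adj p.1 q.1 ∧
    ((¬ (s(p.1, q.1) = s(b, c) ∨ s(p.1, q.1) = s(a, c) ∨ s(p.1, q.1) = s(a, b)) ∧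
        p.2 = q.2) ∨
      (∃ t : Fin 4,
        ((t = 1 ∧ s(p.1, q.1) = s(b, c)) ∨ (t = 2 ∧ s(p.1, q.1) = s(a, c)) ∨
          (t = 3 ∧ s(p.1, q.1) = s(a, b))) ∧
        ((p.2 = q.2 ∧ p.2 ≠ 0 ∧ p.2 ≠ t) ∨ (p.2 = 0 ∧ q.2 = t) ∨ (p.2 = t ∧ q.2 = 0))))
  symm := by
    constructor
    rintro ⟨u, i⟩ ⟨v, j⟩ ⟨hadj, h⟩
    refine ⟨hadj.symm, ?_⟩
    rcases h with ⟨hne, hij⟩ | ⟨t, ht, hidx⟩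
    · refine Or.inl ⟨?_, hij.symm⟩
      rw [Sym2.eq_swap]
      exact hne
    · refine Or.inr ⟨t, ?_, ?_⟩
      · rw [Sym2.eq_swap]
        exact ht
      · rcases hidx with ⟨h1, h2, h3⟩ | ⟨h1, h2⟩ | ⟨h1, h2⟩
        · subst h1
          exact Or.inl ⟨rfl, h2, h3⟩
        · exact Or.inr (Or.inr ⟨h2, h1⟩)
        · exact Or.inr (Or.inl ⟨h2, h1⟩)
  loopless := by
    constructor
    rintro ⟨u, i⟩ ⟨hadj, -⟩
    exact hadj.ne rfl

/-!
Layer `t ∈ {1,2,3}` of the lift is joined to the rest of it only by the two twisted copies of the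
triangle edge `eₜ`, and a Hamiltonian cycle has to enter and leave that layer, so it uses both.
Hence each of `a₀, b₀, c₀` already spends both of its cycle edges on the layers `1, 2, 3`. But the
cycle must also leave the set of copies `v₀` of the vertices `v` outside the triangle (it contains
`d₀`), and the only edges out of that set stay in layer `0` and end at `a₀`, `b₀` or `c₀`: a third
cycle edge there.
-/

namespace SimpleGraph.Walk

variable {W : Type*} {F : SimpleGraph W} {u x y : W}

theorem exists_boundary_dart_of_closed [DecidableEq W] (w : F.Walk u u) (S : Set W)
    (hx : x ∈ w.support) (hxS : x ∈ S) (hy : y ∈ w.support) (hyS : y ∉ S) :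
    ∃ d ∈ w.darts, d.fst ∈ S ∧ d.snd ∉ S := by
  by_cases hu : u ∈ S
  · obtain ⟨d, hd, h⟩ := (w.takeUntil y hy).exists_boundary_dart S hu hyS
    exact ⟨d, w.darts_takeUntil_subset_darts hy hd, h⟩
  · obtain ⟨d, hd, h⟩ := (w.dropUntil x hx).exists_boundary_dart S hxS hu
    exact ⟨d, w.darts_dropUntil_subset_darts hx hd, h⟩

theorem IsTrail.mem_edges_of_boundary_subset [DecidableEq W] {w : F.Walk u u} (hw : w.IsTrail)
    {S : Set W} (hx : x ∈ w.support) (hxS : x ∈ S) (hy : y ∈ w.support) (hyS : y ∉ S)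
    {e₁ e₂ : Sym2 W}
    (hcut : ∀ p q, F.Adj p q → p ∈ S → q ∉ S → s(p, q) = e₁ ∨ s(p, q) = e₂) :
    e₁ ∈ w.edges ∧ e₂ ∈ w.edges := by
  obtain ⟨d, hd, hdS, hdS'⟩ := w.exists_boundary_dart_of_closed S hx hxS hy hyS
  obtain ⟨d', hd', hd'S, hd'S'⟩ :=
    w.exists_boundary_dart_of_closed Sᶜ hy hyS hx (Set.notMem_compl_iff.mpr hxS)
  have hne : d.edge ≠ d'.edge := fun h =>
    hd'S (List.inj_on_of_nodup_map hw.edges_nodup hd hd' h ▸ hdS)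
  have he : d.edge ∈ w.edges := List.mem_map_of_mem hd
  have he' : d'.edge ∈ w.edges := List.mem_map_of_mem hd'
  have hcut' : d'.edge = e₁ ∨ d'.edge = e₂ := by
    rw [Dart.edge, ← Sym2.eq_swap]
    exact hcut _ _ d'.adj.symm (Set.notMem_compl_iff.mp hd'S') hd'S
  rcases hcut _ _ d.adj hdS hdS' with h | h <;> rcases hcut' with h' | h'
  · exact absurd (h.trans h'.symm) hne
  · exact ⟨h ▸ he, h' ▸ he'⟩
  · exact ⟨h' ▸ he', h ▸ he⟩
  · exact absurd (h.trans h'.symm) hne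

theorem IsCycle.not_three_distinct_mem_edges {w : F.Walk u u} (hw : w.IsCycle)
    {z p₁ p₂ p₃ : W} (h₁ : s(p₁, z) ∈ w.edges) (h₂ : s(p₂, z) ∈ w.edges)
    (h₃ : s(p₃, z) ∈ w.edges)
    (h₁₂ : p₁ ≠ p₂) (h₁₃ : p₁ ≠ p₃) (h₂₃ : p₂ ≠ p₃) : False := by
  have hdeg := hw.ncard_neighborSet_toSubgraph_eq_two (w.snd_mem_support_of_mem_edges h₁)
  have hsub : ({p₁, p₂, p₃} : Set W) ⊆ w.toSubgraph.neighborSet z := by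
    simp only [Set.insert_subset_iff, Set.singleton_subset_iff, Subgraph.mem_neighborSet,
      adj_toSubgraph_iff_mem_edges, Sym2.eq_swap (a := z)]
    exact ⟨h₁, h₂, h₃⟩
  have := Set.ncard_le_ncard hsub (Set.finite_of_ncard_ne_zero (by omega))
  rw [Set.ncard_eq_three.mpr ⟨p₁, p₂, p₃, h₁₂, h₁₃, h₂₃, rfl⟩] at this
  omega

end SimpleGraph.Walk

open SimpleGraph

section

variable {V : Type*} {G : SimpleGraph V} {a b c : V}

theorem liftF_edge_leaving_layer {t : Fin 4} (ht : t ≠ 0) {x y : V}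
    (hxy : (t = 1 ∧ s(x, y) = s(b, c)) ∨ (t = 2 ∧ s(x, y) = s(a, c)) ∨
      (t = 3 ∧ s(x, y) = s(a, b)))
    {p q : V × Fin 4} (h : (liftF G a b c).Adj p q) (hp : p.2 = t) (hq : q.2 ≠ t) :
    s(p, q) = s((x, t), (y, 0)) ∨ s(p, q) = s((y, t), (x, 0)) := by
  obtain ⟨p, i⟩ := p
  obtain ⟨q, j⟩ := q
  obtain ⟨-, ⟨-, hij⟩ | ⟨s, hs, hij⟩⟩ := h
  · exact absurd (hij ▸ hp) hq
  dsimp only at hp hq hij hs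
  subst hp
  rcases hij with ⟨rfl, -⟩ | ⟨rfl, -⟩ | ⟨rfl, rfl⟩
  · exact absurd rfl hq
  · exact absurd rfl ht
  have hpq : s(p, q) = s(x, y) := by
    rcases hs with ⟨rfl, h⟩ | ⟨rfl, h⟩ | ⟨rfl, h⟩ <;>
      rcases hxy with ⟨ht, h'⟩ | ⟨ht, h'⟩ | ⟨ht, h'⟩ <;>
      first | exact h.trans h'.symm | exact absurd ht (by decide)
  rcases Sym2.eq_iff.mp hpq with ⟨rfl, rfl⟩ | ⟨rfl, rfl⟩
  · exact Or.inl rfl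
  · exact Or.inr rfl

theorem liftF_adj_snd_eq_zero {v : V} (hv : v ∉ ({a, b, c} : Set V)) {q : V × Fin 4}
    (h : (liftF G a b c).Adj (v, 0) q) : q.2 = 0 := by
  obtain ⟨-, ⟨-, hq⟩ | ⟨t, ht, -⟩⟩ := h
  · exact hq.symm
  · simp only [Set.mem_insert_iff, Set.mem_singleton_iff, not_or] at hv
    rcases ht with ⟨-, h⟩ | ⟨-, h⟩ | ⟨-, h⟩ <;> rcases Sym2.eq_iff.mp h with ⟨h, -⟩ | ⟨h, -⟩ <;>
      simp_all

theorem liftF_twisted_mem_edges [DecidableEq V] {r : V × Fin 4} {w : (liftF G a b c).Walk r r}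
    (hw : w.IsHamiltonianCycle) {t : Fin 4} (ht : t ≠ 0) {x y : V}
    (hxy : (t = 1 ∧ s(x, y) = s(b, c)) ∨ (t = 2 ∧ s(x, y) = s(a, c)) ∨
      (t = 3 ∧ s(x, y) = s(a, b))) :
    s((x, t), (y, 0)) ∈ w.edges ∧ s((y, t), (x, 0)) ∈ w.edges :=
  hw.isCycle.isTrail.mem_edges_of_boundary_subset (S := {p | p.2 = t})
    (hw.mem_support (x, t)) rfl (hw.mem_support (x, 0)) (Ne.symm ht)
    fun _ _ h hp hq => liftF_edge_leaving_layer ht hxy h hp hq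

end

theorem liftF_not_hamiltonian_general {V : Type*} [DecidableEq V]
    (G : SimpleGraph V) (a b c d : V)
    (hda : d ≠ a) (hdb : d ≠ b) (hdc : d ≠ c) :
    ∀ (p : V × Fin 4) (w : (liftF G a b c).Walk p p), ¬ w.IsHamiltonianCycle := by
  intro r w hw
  obtain ⟨bc, cb⟩ := liftF_twisted_mem_edges (x := b) (y := c) hw (by decide) (.inl ⟨rfl, rfl⟩)
  obtain ⟨ac, ca⟩ := liftF_twisted_mem_edges (x := a) (y := c) hw (by decide)
    (.inr (.inl ⟨rfl, rfl⟩))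
  obtain ⟨ab, ba⟩ := liftF_twisted_mem_edges (x := a) (y := b) hw (by decide)
    (.inr (.inr ⟨rfl, rfl⟩))
  obtain ⟨⟨⟨⟨v, i⟩, ⟨z, j⟩⟩, hadj⟩, hvz, ⟨rfl, hv⟩, hz⟩ := w.exists_boundary_dart_of_closed
    {p | p.2 = 0 ∧ p.1 ∉ ({a, b, c} : Set V)} (hw.mem_support (d, 0)) (by simp [hda, hdb, hdc])
    (hw.mem_support (a, 0)) (by simp)
  obtain rfl : j = 0 := liftF_adj_snd_eq_zero hv hadj
  replace hvz : s((v, 0), (z, 0)) ∈ w.edges := List.mem_map_of_mem hvz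
  obtain rfl | rfl | rfl : z = a ∨ z = b ∨ z = c := of_not_not fun h => hz ⟨rfl, h⟩
  · exact hw.isCycle.not_three_distinct_mem_edges hvz ca ba (by simp) (by simp) (by simp)
  · exact hw.isCycle.not_three_distinct_mem_edges hvz cb ab (by simp) (by simp) (by simp)
  · exact hw.isCycle.not_three_distinct_mem_edges hvz bc ac (by simp) (by simp) (by simp)

/-- If `G` contains a triangle `{a,b,c}`, has at least one additional vertex,
and every vertex has degree at least 1, then the lift `F` obtained by twisting
the triangle edges contains no Hamiltonian cycle. -/
theorem liftF_not_hamiltonian {V : Type*} [Fintype V] [DecidableEq V]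
    (G : SimpleGraph V) (a b c d : V)
    (hab : G.Adj a b) (hac : G.Adj a c) (hbc : G.Adj b c)
    (hda : d ≠ a) (hdb : d ≠ b) (hdc : d ≠ c)
    (hdeg : ∀ v : V, ∃ u : V, G.Adj v u) :
    ∀ (p : V × Fin 4) (w : (liftF G a b c).Walk p p), ¬ w.IsHamiltonianCycle :=
  liftF_not_hamiltonian_general G a b c d hda hdb hdc
end

section
/- Let G be a finite graph of diameter at most 2 in which all first-round color refinement colors C_1(v) are pairwise distinct. Then the isomorphism type of G is determined by the color C_4(v) of any single vertex v; more precisely, for any vertex v, the fourth-round color C_4(v) determines the edge set of the graph G' on vertex set {C_1(w) : w ∈ V(G)} isomorphic to G via w ↦ C_1(w). -/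
/-- The edge set of the relabeled copy `G'` of `G` on the vertex set
`{C₁(w) : w ∈ V(G)}`, where `C₁(u)` and `C₁(w)` are adjacent iff `u ~ w`. -/
def colorEdges {V : Type*} [Fintype V] (G : SimpleGraph V) [DecidableRel G.Adj] :
    Set (Sym2 (ColorType 1)) :=
  {e | ∃ u u' : V, G.Adj u u' ∧ e = s(CR G 1 u, CR G 1 u')}

/-! A colour `C₂(w)` determines the `G'`-edges at `w`: coarsening it gives `C₁(w)`, and its
elements are the `C₁`-colours of the neighbours of `w`. The colour `C₄(v)` lists `C₃(u)` for the
neighbours `u` of `v`, and each `C₃(u)` yields `C₂(u)` by coarsening and lists `C₂` of the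
neighbours of `u`. So `C₄(v)` exposes `C₂(w)` for every `w` within distance two of `v` along a
walk of positive length, which under the diameter bound is every non-isolated vertex. -/

namespace ColorType

-- `ColorType (r + 1)` is a multiset only after unfolding `ColorType`, which instance search does not do.
instance instMembership (r : ℕ) : Membership (ColorType r) (ColorType (r + 1)) :=
  inferInstanceAs (Membership (ColorType r) (Multiset (ColorType r)))

def coarsen : (r : ℕ) → ColorType (r + 1) → ColorType r
  | 0, c => Multiset.card (α := ℕ) c
  | r + 1, c => Multiset.map (coarsen r) (c : Multiset (ColorType (r + 1)))

def nearColors {r : ℕ} (c : ColorType (r + 2)) : Set (ColorType r) :=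
  {a | ∃ b ∈ c, a = coarsen r b ∨ a ∈ b}

def starEdges (c : ColorType 2) : Set (Sym2 (ColorType 1)) :=
  {e | ∃ a ∈ c, e = s(coarsen 1 c, a)}

end ColorType

open ColorType

section
variable {V : Type*} [Fintype V] (G : SimpleGraph V) [DecidableRel G.Adj]

theorem mem_CR_succ {r : ℕ} {x : V} {a : ColorType r} :
    a ∈ CR G (r + 1) x ↔ ∃ y, G.Adj x y ∧ CR G r y = a := by
  show a ∈ (G.neighborFinset x).val.map (CR G r) ↔ _
  simp

theorem coarsen_CR_succ (r : ℕ) (x : V) : coarsen r (CR G (r + 1) x) = CR G r x := by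
  induction r generalizing x with
  | zero => exact Multiset.card_map _ _
  | succ r ih =>
    show Multiset.map _ (Multiset.map _ _) = _
    rw [Multiset.map_map]
    exact Multiset.map_congr rfl fun y _ => ih y

theorem starEdges_CR_two (w : V) :
    starEdges (CR G 2 w) = {e | ∃ w', G.Adj w w' ∧ e = s(CR G 1 w, CR G 1 w')} := by
  ext e
  simp only [starEdges, coarsen_CR_succ, Set.mem_ofPred_eq]
  constructor
  · rintro ⟨a, ha, rfl⟩
    obtain ⟨w', hww', rfl⟩ := (mem_CR_succ G).1 ha
    exact ⟨w', hww', rfl⟩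
  · rintro ⟨w', hww', rfl⟩
    exact ⟨_, (mem_CR_succ G).2 ⟨w', hww', rfl⟩, rfl⟩

theorem exists_CR_eq_of_mem_nearColors {r : ℕ} {v : V} {a : ColorType r}
    (h : a ∈ nearColors (CR G (r + 2) v)) : ∃ w, CR G r w = a := by
  obtain ⟨b, hb, ha⟩ := h
  obtain ⟨u, -, rfl⟩ := (mem_CR_succ G).1 hb
  rcases ha with rfl | ha
  · exact ⟨u, (coarsen_CR_succ G r u).symm⟩
  · obtain ⟨w, -, rfl⟩ := (mem_CR_succ G).1 ha
    exact ⟨w, rfl⟩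

theorem CR_mem_nearColors
    (hdiam : ∀ x y : V, x ≠ y → G.Adj x y ∨ ∃ z, G.Adj x z ∧ G.Adj z y)
    (r : ℕ) (v : V) {w w' : V} (hw : G.Adj w w') : CR G r w ∈ nearColors (CR G (r + 2) v) := by
  have via {u : V} (hvu : G.Adj v u)
      (hu : CR G r w = coarsen r (CR G (r + 1) u) ∨ CR G r w ∈ CR G (r + 1) u) :
      CR G r w ∈ nearColors (CR G (r + 2) v) :=
    ⟨_, (mem_CR_succ G).2 ⟨u, hvu, rfl⟩, hu⟩
  obtain rfl | hvw := eq_or_ne v w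
  · exact via hw (Or.inr ((mem_CR_succ G).2 ⟨v, hw.symm, rfl⟩))
  rcases hdiam v w hvw with hvw | ⟨z, hvz, hzw⟩
  · exact via hvw (Or.inl (coarsen_CR_succ G r w).symm)
  · exact via hvz (Or.inr ((mem_CR_succ G).2 ⟨w, hzw, rfl⟩))

end

/-- For a finite graph `G` of diameter at most `2` whose first-round color
refinement colors are pairwise distinct, the isomorphism type of `G` is
determined by the fourth-round color `C₄(v)` of any single vertex `v`: there is
a reconstruction function that recovers from `C₄(v)` the edge set of the copy
`G'` of `G` on the vertex set `{C₁(w) : w ∈ V(G)}` (isomorphic to `G` via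
`w ↦ C₁(w)`). -/
theorem C4_determines_graph :
    ∃ recon : ColorType 4 → Set (Sym2 (ColorType 1)),
      ∀ (V : Type) [Fintype V] (G : SimpleGraph V) [DecidableRel G.Adj],
        (∀ x y : V, x ≠ y → G.Adj x y ∨ ∃ z, G.Adj x z ∧ G.Adj z y) →
        Function.Injective (CR G 1) →
        ∀ v : V, recon (CR G 4 v) = colorEdges G := by
  refine ⟨fun c => ⋃ c₂ ∈ nearColors c, starEdges c₂, fun V _ G _ hdiam _ v => ?_⟩
  ext e
  simp only [Set.mem_iUnion, exists_prop]
  constructor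
  · rintro ⟨c₂, hc₂, he⟩
    obtain ⟨w, rfl⟩ := exists_CR_eq_of_mem_nearColors G hc₂
    rw [starEdges_CR_two] at he
    obtain ⟨w', hww', rfl⟩ := he
    exact ⟨w, w', hww', rfl⟩
  · rintro ⟨w, w', hww', rfl⟩
    refine ⟨CR G 2 w, CR_mem_nearColors G hdiam 2 v hww', ?_⟩
    rw [starEdges_CR_two]
    exact ⟨w', hww', rfl⟩
end
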